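/- If $K_1 \subseteq K_2$ are bounded convex bodies in $\mathbb{R}^n$, then the surface measure ($(n-1)$-dimensional Hausdorff measure of the topological boundary) of $K_1$ is at most that of $K_2$. -/
import Mathlib


open MeasureTheory
open scoped InnerProductSpace

/-- Existence of the metric projection onto a closed convex set, characterized by the
variational inequality. -/
lemma exists_proj_aux {E : Type*} [NormedAddCommGroup E] [InnerProductSpace ℝ E]
    [CompleteSpace E] {K : Set E} (hK : Convex ℝ K) (hcl : IsClosed K) (hne : K.Nonempty) (u : E) :
    ∃ v ∈ K, ∀ w ∈ K, ⟪u - v, w - v⟫_ℝ ≤ 0 := by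
  obtain ⟨v, hv, hmin⟩ := exists_norm_eq_iInf_of_complete_convex hne hcl.isComplete hK u
  exact ⟨v, hv, (norm_eq_iInf_iff_real_inner_le_zero hK hv).1 hmin⟩

/-- If `K₁ ⊆ K₂` are bounded convex bodies in `ℝⁿ` (compact convex sets with nonempty
interior), then the surface measure (the `(n-1)`-dimensional Hausdorff measure of the
topological boundary) of `K₁` is at most that of `K₂`. -/
theorem stmt0 (n : ℕ) (hn : 2 ≤ n)
    (K1 K2 : Set (EuclideanSpace ℝ (Fin n)))
    (hK1conv : Convex ℝ K1) (hK2conv : Convex ℝ K2)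
    (hK1cpt : IsCompact K1) (hK2cpt : IsCompact K2)
    (hK1int : (interior K1).Nonempty) (hK2int : (interior K2).Nonempty)
    (hsub : K1 ⊆ K2) :
    μH[(n - 1 : ℝ)] (frontier K1) ≤ μH[(n - 1 : ℝ)] (frontier K2) := by
  obtain ⟨a0, ha0⟩ := hK1int
  have hne : K1.Nonempty := ⟨a0, interior_subset ha0⟩
  -- the metric projection onto K1
  choose P hPmem hP using exists_proj_aux hK1conv hK1cpt.isClosed hne
  -- P is 1-Lipschitz
  have hlip : LipschitzWith 1 P := by
    refine LipschitzWith.of_dist_le_mul fun u v => ?_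
    rw [NNReal.coe_one, one_mul, dist_eq_norm, dist_eq_norm]
    have h1 := hP u (P v) (hPmem v)
    have h2 := hP v (P u) (hPmem u)
    have key : ‖P u - P v‖ ^ 2 ≤ ⟪u - v, P u - P v⟫_ℝ := by
      have e : ⟪u - v, P u - P v⟫_ℝ =
          ⟪u - P u, P u - P v⟫_ℝ - ⟪v - P v, P u - P v⟫_ℝ + ‖P u - P v‖ ^ 2 := by
        rw [← real_inner_self_eq_norm_sq, ← inner_sub_left, ← inner_add_left]
        congr 1
        abel
      have h1' : 0 ≤ ⟪u - P u, P u - P v⟫_ℝ := by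
        have hne' : P v - P u = -(P u - P v) := by abel
        rw [hne', inner_neg_right] at h1
        linarith
      linarith
    rcases eq_or_ne (P u) (P v) with h | h
    · simp [h]
    · have hpos : 0 < ‖P u - P v‖ := by
        rw [norm_pos_iff]; exact sub_ne_zero.2 h
      have hcs := real_inner_le_norm (u - v) (P u - P v)
      nlinarith
  -- uniqueness of the projection
  have huniq : ∀ (x y : EuclideanSpace ℝ (Fin n)), x ∈ K1 → (∀ w ∈ K1, ⟪y - x, w - x⟫_ℝ ≤ 0) → P y = x := by
    intro x y hx hchar
    have h1 := hP y x hx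
    have h2 := hchar (P y) (hPmem y)
    have e : ‖x - P y‖ ^ 2 = ⟪y - P y, x - P y⟫_ℝ - ⟪y - x, x - P y⟫_ℝ := by
      rw [← real_inner_self_eq_norm_sq, ← inner_sub_left]
      congr 1
      abel
    have h2' : -⟪y - x, x - P y⟫_ℝ ≤ 0 := by
      have hne' : P y - x = -(x - P y) := by abel
      rw [hne', inner_neg_right] at h2
      linarith
    have hsq : ‖x - P y‖ ^ 2 ≤ 0 := by linarith
    have : x - P y = 0 := by
      have := sq_nonneg ‖x - P y‖
      have hz : ‖x - P y‖ ^ 2 = 0 := le_antisymm hsq this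
      have : ‖x - P y‖ = 0 := by nlinarith [norm_nonneg (x - P y)]
      exact norm_eq_zero.1 this
    have := sub_eq_zero.1 this
    exact this.symm
  -- frontier K1 is covered by the image of frontier K2 under P
  have hcover : frontier K1 ⊆ P '' frontier K2 := by
    intro z hz
    have hz1 : z ∈ K1 := hK1cpt.isClosed.frontier_subset hz
    have hz2 : z ∉ interior K1 := hz.2
    obtain ⟨f, hf⟩ := geometric_hahn_banach_open_point hK1conv.interior isOpen_interior hz2
    -- f ≤ f z on K1
    have hfle : ∀ w ∈ K1, f w ≤ f z := by
      intro w hw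
      have tend : Filter.Tendsto (fun t : ℝ => f ((1 - t) • w + t • a0))
          (nhdsWithin 0 (Set.Ioi 0)) (nhds (f w)) := by
        have hc : Continuous fun t : ℝ => f ((1 - t) • w + t • a0) := by fun_prop
        have h0 := hc.tendsto 0
        simp only [sub_zero, one_smul, zero_smul, add_zero] at h0
        exact h0.mono_left nhdsWithin_le_nhds
      refine le_of_tendsto tend ?_
      filter_upwards [Ioo_mem_nhdsGT_of_mem
        (Set.mem_Ico.2 ⟨le_refl (0 : ℝ), one_pos⟩)] with t ht
      have hmem : (1 - t) • w + t • a0 ∈ interior K1 :=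
        hK1conv.combo_closure_interior_mem_interior (subset_closure hw) ha0
          (by linarith [ht.2]) ht.1 (by ring)
      exact (hf _ hmem).le
    -- the outward normal vector
    set ν : EuclideanSpace ℝ (Fin n) := (InnerProductSpace.toDual ℝ (EuclideanSpace ℝ (Fin n))).symm f with hν
    have hνapp : ∀ x : EuclideanSpace ℝ (Fin n), ⟪ν, x⟫_ℝ = f x := fun x => InnerProductSpace.toDual_symm_apply
    have hν0 : ν ≠ 0 := by
      intro h
      have h1 : f a0 = 0 := by rw [← hνapp, h]; simp
      have h2 : f z = 0 := by rw [← hνapp, h]; simp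
      have := hf a0 ha0
      rw [h1, h2] at this
      exact lt_irrefl 0 this
    -- the exit point of the ray z + t • ν from K2
    set S : Set ℝ := {t : ℝ | 0 ≤ t ∧ z + t • ν ∈ K2} with hS
    have hS0 : (0 : ℝ) ∈ S := ⟨le_refl 0, by simpa using hsub hz1⟩
    obtain ⟨R, hR⟩ := hK2cpt.isBounded.subset_closedBall 0
    have hνpos : 0 < ‖ν‖ := norm_pos_iff.2 hν0
    have hSbdd : BddAbove S := by
      refine ⟨(R + ‖z‖) / ‖ν‖, fun t ht => ?_⟩
      rw [le_div_iff₀ hνpos]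
      have h1 : ‖z + t • ν‖ ≤ R := by
        have := hR ht.2
        rwa [Metric.mem_closedBall, dist_zero_right] at this
      have h2 : ‖t • ν‖ ≤ ‖z + t • ν‖ + ‖z‖ := by
        calc ‖t • ν‖ = ‖(z + t • ν) - z‖ := by rw [add_sub_cancel_left]
          _ ≤ ‖z + t • ν‖ + ‖z‖ := norm_sub_le _ _
      rw [norm_smul, Real.norm_of_nonneg ht.1] at h2
      linarith
    have hSclosed : IsClosed S := by
      have : S = Set.Ici (0 : ℝ) ∩ ((fun t : ℝ => z + t • ν) ⁻¹' K2) := by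
        ext t; simp [hS, Set.mem_Ici]
      rw [this]
      exact isClosed_Ici.inter (hK2cpt.isClosed.preimage (by fun_prop))
    set T : ℝ := sSup S with hT
    have hTS : T ∈ S := hSclosed.csSup_mem ⟨0, hS0⟩ hSbdd
    set y : EuclideanSpace ℝ (Fin n) := z + T • ν with hy
    have hyK2 : y ∈ K2 := hTS.2
    have hynotint : y ∉ interior K2 := by
      intro h
      obtain ⟨ε, hε, hball⟩ := Metric.isOpen_iff.1 isOpen_interior y h
      set δ : ℝ := ε / (2 * ‖ν‖) with hδ
      have hδpos : 0 < δ := div_pos hε (by linarith)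
      have hmem : z + (T + δ) • ν ∈ K2 := by
        apply interior_subset
        apply hball
        rw [Metric.mem_ball, dist_eq_norm]
        have : z + (T + δ) • ν - y = δ • ν := by
          rw [hy]; module
        rw [this, norm_smul, Real.norm_of_nonneg hδpos.le, hδ,
          div_mul_eq_mul_div, div_lt_iff₀ (by positivity)]
        nlinarith
      have hTδ : T + δ ∈ S := ⟨by linarith [hTS.1], hmem⟩
      have := le_csSup hSbdd hTδ
      linarith
    refine ⟨y, ?_, ?_⟩
    · exact ⟨subset_closure hyK2, hynotint⟩
    · apply huniq z y hz1
      intro w hw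
      have hyz : y - z = T • ν := by rw [hy]; abel
      rw [hyz, real_inner_smul_left]
      have : ⟪ν, w - z⟫_ℝ = f w - f z := by
        rw [inner_sub_right, hνapp, hνapp]
      rw [this]
      exact mul_nonpos_of_nonneg_of_nonpos hTS.1 (by linarith [hfle w hw])
  -- conclude by monotonicity of Hausdorff measure under 1-Lipschitz maps
  have hd : (0 : ℝ) ≤ (n : ℝ) - 1 := by
    have : (2 : ℝ) ≤ (n : ℝ) := by exact_mod_cast hn
    linarith
  calc μH[(n - 1 : ℝ)] (frontier K1)
      ≤ μH[(n - 1 : ℝ)] (P '' frontier K2) := measure_mono hcover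
    _ ≤ μH[(n - 1 : ℝ)] (frontier K2) := by
        simpa using hlip.hausdorffMeasure_image_le hd (frontier K2)
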